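/- arXiv:1907.13543 — 2 statements merged into one kernel-verified Lean document; each statement's English description precedes it below -/
import Mathlib

section
/- Let G be a finite group of order N, ρ : G → M_n(ℂ) a function with ρ(g·h) = ρ(g)·ρ(h) and each ρ(g) invertible, δ : G → M_n(ℂ) arbitrary, and define F(g,h) = ρ(g)·δ(h) + δ(g)·ρ(h) − δ(g·h). Then for every g ∈ G: (2N)·δ(g) = ∑_{h∈G} ( F(g,h)·ρ(h)⁻¹ + ρ(h)⁻¹·F(h,g) ) + [ρ(g), ∑_{h∈G} [ρ(h)⁻¹, δ(h)] ], where [A,B] = AB − BA. -/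
open Matrix BigOperators

/-- Exact expression for the deviations: with defect
`F g h = ρ g * δ h + δ g * ρ h - δ (g*h)`,
`2N • δ g = ∑ h, (F g h * (ρ h)⁻¹ + (ρ h)⁻¹ * F h g)
  + [ρ g, ∑ h, [(ρ h)⁻¹, δ h]]`. -/
theorem stmt_3 {n : ℕ} {G : Type*} [Group G] [Fintype G]
    (ρ δ : G → Matrix (Fin n) (Fin n) ℂ)
    (hρ : ∀ g h : G, ρ (g * h) = ρ g * ρ h)
    (hinv : ∀ g : G, IsUnit (ρ g))
    (F : G → G → Matrix (Fin n) (Fin n) ℂ)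
    (hF : ∀ g h : G, F g h = ρ g * δ h + δ g * ρ h - δ (g * h)) :
    ∀ g : G, ((2 * Fintype.card G : ℕ) : ℂ) • δ g =
      (∑ h : G, (F g h * (ρ h)⁻¹ + (ρ h)⁻¹ * F h g)) +
      (ρ g * (∑ h : G, ((ρ h)⁻¹ * δ h - δ h * (ρ h)⁻¹)) -
        (∑ h : G, ((ρ h)⁻¹ * δ h - δ h * (ρ h)⁻¹)) * ρ g) := by
  intro g
  have hdet : ∀ k : G, IsUnit (ρ k).det :=
    fun k => (Matrix.isUnit_iff_isUnit_det _).mp (hinv k)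
  have hinvmul : ∀ k : G, (ρ k)⁻¹ * ρ k = 1 :=
    fun k => Matrix.nonsing_inv_mul _ (hdet k)
  have hmulinv : ∀ k : G, ρ k * (ρ k)⁻¹ = 1 :=
    fun k => Matrix.mul_nonsing_inv _ (hdet k)
  set S := ∑ h : G, δ h * (ρ h)⁻¹ with hS
  set T := ∑ h : G, (ρ h)⁻¹ * δ h with hT
  have e1 : ∑ h : G, δ (g * h) * (ρ h)⁻¹ = S * ρ g := by
    rw [hS, Finset.sum_mul]
    refine Fintype.sum_equiv (Equiv.mulLeft g) _ _ (fun h => ?_)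
    show δ (g * h) * (ρ h)⁻¹ = δ (g * h) * (ρ (g * h))⁻¹ * ρ g
    rw [hρ, Matrix.mul_inv_rev, Matrix.mul_assoc, Matrix.mul_assoc,
      hinvmul, Matrix.mul_one]
  have e2 : ∑ h : G, (ρ h)⁻¹ * δ (h * g) = ρ g * T := by
    rw [hT, Finset.mul_sum]
    refine Fintype.sum_equiv (Equiv.mulRight g) _ _ (fun h => ?_)
    show (ρ h)⁻¹ * δ (h * g) = ρ g * ((ρ (h * g))⁻¹ * δ (h * g))
    rw [hρ, Matrix.mul_inv_rev, ← Matrix.mul_assoc, ← Matrix.mul_assoc,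
      hmulinv, Matrix.one_mul]
  have hc : ∑ _h : G, δ g = (Fintype.card G : ℂ) • δ g := by
    simp [Finset.sum_const, Nat.cast_smul_eq_nsmul]
  have h1 : ∑ h : G, F g h * (ρ h)⁻¹
      = ρ g * S + (Fintype.card G : ℂ) • δ g - S * ρ g := by
    have step : ∑ h : G, F g h * (ρ h)⁻¹
        = ∑ h : G, (ρ g * (δ h * (ρ h)⁻¹) + δ g - δ (g * h) * (ρ h)⁻¹) := by
      refine Finset.sum_congr rfl (fun h _ => ?_)
      rw [hF, Matrix.sub_mul, Matrix.add_mul, Matrix.mul_assoc, Matrix.mul_assoc,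
        hmulinv, Matrix.mul_one]
    rw [step, Finset.sum_sub_distrib, Finset.sum_add_distrib, e1,
      ← Finset.mul_sum, ← hS, hc]
  have h2 : ∑ h : G, (ρ h)⁻¹ * F h g
      = T * ρ g + (Fintype.card G : ℂ) • δ g - ρ g * T := by
    have step : ∑ h : G, (ρ h)⁻¹ * F h g
        = ∑ h : G, ((ρ h)⁻¹ * δ h * ρ g + δ g - (ρ h)⁻¹ * δ (h * g)) := by
      refine Finset.sum_congr rfl (fun h _ => ?_)
      rw [hF, Matrix.mul_sub, Matrix.mul_add, ← Matrix.mul_assoc, ← Matrix.mul_assoc,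
        hinvmul, Matrix.one_mul]
      noncomm_ring
    rw [step, Finset.sum_sub_distrib, Finset.sum_add_distrib, e2,
      ← Finset.sum_mul, ← hT, hc]
  have hsum : ∑ h : G, ((ρ h)⁻¹ * δ h - δ h * (ρ h)⁻¹) = T - S := by
    rw [hT, hS, Finset.sum_sub_distrib]
  rw [Finset.sum_add_distrib, h1, h2, hsum]
  push_cast
  rw [two_mul, add_smul]
  noncomm_ring
end

section
/- Let G be a finite group of order N, ρ : G → M_n(ℂ) a function with ρ(g·h) = ρ(g)·ρ(h) and each ρ(g) invertible, δ : G → M_n(ℂ) arbitrary, and define F(g,h) = ρ(g)·δ(h) + δ(g)·ρ(h) − δ(g·h). If ∑_{h∈G} [ρ(h)⁻¹, δ(h)] = 0, then for every g ∈ G the first-order correction formula holds exactly: δ(g) = (1/(2N)) · ∑_{h∈G} ( F(g,h)·ρ(h)⁻¹ + ρ(h)⁻¹·F(h,g) ). -/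
open Matrix BigOperators

/-- First-order correction formula: if `∑ h, [(ρ h)⁻¹, δ h] = 0` then
`δ g = (1/(2N)) • ∑ h, (F g h * (ρ h)⁻¹ + (ρ h)⁻¹ * F h g)`. -/
theorem stmt_4 {n : ℕ} {G : Type*} [Group G] [Fintype G]
    (ρ δ : G → Matrix (Fin n) (Fin n) ℂ)
    (hρ : ∀ g h : G, ρ (g * h) = ρ g * ρ h)
    (hinv : ∀ g : G, IsUnit (ρ g))
    (F : G → G → Matrix (Fin n) (Fin n) ℂ)
    (hF : ∀ g h : G, F g h = ρ g * δ h + δ g * ρ h - δ (g * h))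
    (hcomm : ∑ h : G, ((ρ h)⁻¹ * δ h - δ h * (ρ h)⁻¹) = 0) :
    ∀ g : G, δ g = (1 / (2 * (Fintype.card G : ℂ))) •
      ∑ h : G, (F g h * (ρ h)⁻¹ + (ρ h)⁻¹ * F h g) := by
  intro g
  have h1 : ρ 1 = 1 := (hinv 1).mul_left_cancel (by rw [← hρ, mul_one, mul_one])
  have hinvρ : ∀ h : G, (ρ h)⁻¹ = ρ h⁻¹ := fun h =>
    Matrix.inv_eq_left_inv (by rw [← hρ, inv_mul_cancel, h1])
  have hmul : ∀ h : G, (ρ h)⁻¹ * ρ h = 1 := fun h => by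
    rw [hinvρ, ← hρ, inv_mul_cancel, h1]
  have hmul' : ∀ h : G, ρ h * (ρ h)⁻¹ = 1 := fun h => by
    rw [hinvρ, ← hρ, mul_inv_cancel, h1]
  set A := ∑ h : G, δ h * (ρ h)⁻¹ with hA
  set C := ∑ h : G, (ρ h)⁻¹ * δ h with hC
  have hACeq : A = C := by
    have h0 : C - A = 0 := by rw [hA, hC, ← Finset.sum_sub_distrib, hcomm]
    rw [sub_eq_zero.mp h0]
  have s1 : ∑ h : G, δ (g * h) * (ρ h)⁻¹ = A * ρ g := by
    rw [hA, Finset.sum_mul]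
    refine Fintype.sum_equiv (Equiv.mulLeft g) _ _ fun k => ?_
    simp only [Equiv.coe_mulLeft]
    rw [mul_assoc, hinvρ k, hinvρ (g*k), ← hρ]
    congr 2
    group
  have s2 : ∑ h : G, (ρ h)⁻¹ * δ (h * g) = ρ g * C := by
    rw [hC, Finset.mul_sum]
    refine Fintype.sum_equiv (Equiv.mulRight g) _ _ fun k => ?_
    simp only [Equiv.coe_mulRight]
    rw [← mul_assoc, hinvρ k, hinvρ (k*g), ← hρ]
    congr 2
    group
  have expand : ∀ h : G, F g h * (ρ h)⁻¹ + (ρ h)⁻¹ * F h g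
      = (δ g + δ g) + (ρ g * (δ h * (ρ h)⁻¹) + ((ρ h)⁻¹ * δ h) * ρ g)
        - (δ (g * h) * (ρ h)⁻¹ + (ρ h)⁻¹ * δ (h * g)) := by
    intro h
    rw [hF, hF, sub_mul, add_mul, mul_sub, mul_add,
      mul_assoc (δ g), hmul' h, mul_one, ← mul_assoc ((ρ h)⁻¹) (ρ h), hmul h, one_mul,
      mul_assoc (ρ g), mul_assoc ((ρ h)⁻¹)]
    abel
  have key : ∑ h : G, (F g h * (ρ h)⁻¹ + (ρ h)⁻¹ * F h g)
      = (2 * (Fintype.card G : ℂ)) • δ g := by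
    calc ∑ h : G, (F g h * (ρ h)⁻¹ + (ρ h)⁻¹ * F h g)
        = ∑ h : G, ((δ g + δ g) + (ρ g * (δ h * (ρ h)⁻¹) + ((ρ h)⁻¹ * δ h) * ρ g)
            - (δ (g * h) * (ρ h)⁻¹ + (ρ h)⁻¹ * δ (h * g))) :=
          Finset.sum_congr rfl fun h _ => expand h
      _ = (Fintype.card G) • (δ g + δ g) + (ρ g * A + C * ρ g) - (A * ρ g + ρ g * C) := by
          rw [Finset.sum_sub_distrib]
          simp only [Finset.sum_add_distrib, Finset.sum_const, Finset.card_univ,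
            ← Finset.mul_sum, ← Finset.sum_mul, s1, s2, ← hA, ← hC, smul_add]
      _ = (2 * (Fintype.card G : ℂ)) • δ g := by
          rw [hACeq, two_mul, add_smul, ← Nat.cast_smul_eq_nsmul ℂ, smul_add]
          abel
  rw [key, smul_smul, one_div, inv_mul_cancel₀, one_smul]
  have hc : (Fintype.card G : ℂ) ≠ 0 := Nat.cast_ne_zero.mpr Fintype.card_ne_zero
  simp [hc]
end
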